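/- arXiv:2007.14156 — 6 statements merged into one kernel-verified Lean document; each statement's English description precedes it below -/
import Mathlib

section
/- Every proper function is weakly supermodular: if f: 2^V → {0,1} satisfies f(V)=0, f(S)=f(V∖S) for all S, and f(A∪B) ≤ max{f(A), f(B)} for all disjoint A,B ⊆ V, then f(∅)=f(V)=0 and for all A,B ⊆ V, f(A)+f(B) ≤ max{f(A∩B)+f(A∪B), f(A∖B)+f(B∖A)}. -/
section ProperFunction

variable {V : Type*} [DecidableEq V] (f : Finset V → ℕ)

theorem le_max_inter_sdiff
    (hprop : ∀ A B : Finset V, Disjoint A B → f (A ∪ B) ≤ max (f A) (f B)) (A B : Finset V) :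
    f A ≤ max (f (A ∩ B)) (f (A \ B)) := by
  simpa only [Finset.sdiff_union_inter, max_comm] using
    hprop _ _ (Finset.disjoint_sdiff_inter A B)

theorem le_max_union_sdiff [Fintype V]
    (hsym : ∀ S : Finset V, f S = f (Finset.univ \ S))
    (hprop : ∀ A B : Finset V, Disjoint A B → f (A ∪ B) ≤ max (f A) (f B)) (A B : Finset V) :
    f A ≤ max (f (A ∪ B)) (f (B \ A)) := by
  have hcompl (S : Finset V) : f S = f Sᶜ := by rw [Finset.compl_eq_univ_sdiff, ← hsym]
  have := le_max_inter_sdiff f hprop Aᶜ Bᶜ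
  rwa [← Finset.compl_union, compl_sdiff_compl, ← hcompl, ← hcompl] at this

end ProperFunction

/-- Every proper function is weakly supermodular. -/
theorem proper_implies_weakly_supermodular
    {V : Type*} [Fintype V] [DecidableEq V]
    (f : Finset V → ℕ) (h01 : ∀ S, f S ≤ 1)
    (hV : f (Finset.univ : Finset V) = 0)
    (hsym : ∀ S : Finset V, f S = f (Finset.univ \ S))
    (hprop : ∀ A B : Finset V, Disjoint A B → f (A ∪ B) ≤ max (f A) (f B)) :
    f (∅ : Finset V) = 0 ∧ f (Finset.univ : Finset V) = 0 ∧
      ∀ A B : Finset V,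
        f A + f B ≤ max (f (A ∩ B) + f (A ∪ B)) (f (A \ B) + f (B \ A)) := by
  refine ⟨by simpa [hV] using hsym ∅, hV, fun A B => ?_⟩
  have hA₁ := le_max_inter_sdiff f hprop A B
  have hB₁ := le_max_inter_sdiff f hprop B A
  have hA₂ := le_max_union_sdiff f hsym hprop A B
  have hB₂ := le_max_union_sdiff f hsym hprop B A
  rw [Finset.inter_comm] at hB₁
  rw [Finset.union_comm] at hB₂
  have := h01 A; have := h01 B; have := h01 (A ∩ B)
  have := h01 (A ∪ B); have := h01 (A \ B); have := h01 (B \ A)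
  -- If `f A = f B = 1`, the four bounds leave only `f (A ∩ B) = f (A ∪ B) = 1`
  -- or `f (A \ B) = f (B \ A) = 1`.
  omega
end

section
/- If f: 2^V → {0,1} is uncrossable, then any two distinct minimal sets S with f(S)=1 that are not crossed by a given edge set F are disjoint. That is, if A and B are both inclusion-minimal among sets S with f(S)=1 and δ_F(S)=∅, and A ≠ B, then A ∩ B = ∅. -/
/-!
If `A` and `B` meet, uncrossability yields `f = 1` on `A ∩ B` or on `A \ B`. Both sets are
uncrossed by `F` since `A` and `B` are, and both are proper subsets of `A`, except when
`A ⊆ B`, where `A` itself is a smaller unsatisfied subset of `B`. Either way one of `A`, `B`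
is not minimal.
-/

/-- An edge (unordered, represented as a pair) crosses a set `S` if it has
exactly one endpoint in `S`. -/
abbrev crossesEdge {V : Type*} [DecidableEq V] (e : V × V) (S : Finset V) : Prop :=
  ¬(e.1 ∈ S ↔ e.2 ∈ S)

section crossesEdge

variable {V : Type*} [DecidableEq V] {e : V × V} {A B : Finset V}

lemma not_crossesEdge_inter (hA : ¬crossesEdge e A) (hB : ¬crossesEdge e B) :
    ¬crossesEdge e (A ∩ B) := by
  simp only [crossesEdge, not_not, Finset.mem_inter] at *
  rw [hA, hB]

lemma not_crossesEdge_sdiff (hA : ¬crossesEdge e A) (hB : ¬crossesEdge e B) :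
    ¬crossesEdge e (A \ B) := by
  simp only [crossesEdge, not_not, Finset.mem_sdiff] at *
  rw [hA, hB]

end crossesEdge

theorem minimal_unsatisfied_disjoint_general
    {V : Type*} [DecidableEq V]
    (f : Finset V → ℕ)
    (hempty : f (∅ : Finset V) = 0)
    (huncross : ∀ A B : Finset V, f A = 1 → f B = 1 →
      (f (A ∩ B) = 1 ∧ f (A ∪ B) = 1) ∨ (f (A \ B) = 1 ∧ f (B \ A) = 1))
    (F : Finset (V × V)) (A B : Finset V)
    (hAuns : f A = 1 ∧ ∀ e ∈ F, ¬ crossesEdge e A)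
    (hAmin : ∀ T : Finset V, T ⊂ A → T.Nonempty →
      ¬(f T = 1 ∧ ∀ e ∈ F, ¬ crossesEdge e T))
    (hBuns : f B = 1 ∧ ∀ e ∈ F, ¬ crossesEdge e B)
    (hBmin : ∀ T : Finset V, T ⊂ B → T.Nonempty →
      ¬(f T = 1 ∧ ∀ e ∈ F, ¬ crossesEdge e T))
    (hne : A ≠ B) :
    A ∩ B = ∅ := by
  obtain ⟨hfA, hFA⟩ := hAuns
  obtain ⟨hfB, hFB⟩ := hBuns
  have nonempty_of_eq_one {S : Finset V} (hS : f S = 1) : S.Nonempty :=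
    Finset.nonempty_iff_ne_empty.2 <| by rintro rfl; omega
  by_contra hAB
  have hmeet : (A ∩ B).Nonempty := Finset.nonempty_iff_ne_empty.2 hAB
  rcases huncross A B hfA hfB with ⟨hfAB, -⟩ | ⟨hfAB, -⟩
  · by_cases hAsubB : A ⊆ B
    · exact hBmin A (hAsubB.ssubset_of_ne hne) (nonempty_of_eq_one hfA) ⟨hfA, hFA⟩
    · exact hAmin _ (inf_lt_left.2 hAsubB) hmeet
        ⟨hfAB, fun e he => not_crossesEdge_inter (hFA e he) (hFB e he)⟩
  · have hproper : A \ B ⊂ A :=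
      sdiff_lt_left.2 <| Finset.not_disjoint_iff_nonempty_inter.2 (Finset.inter_comm A B ▸ hmeet)
    exact hAmin _ hproper (nonempty_of_eq_one hfAB)
      ⟨hfAB, fun e he => not_crossesEdge_sdiff (hFA e he) (hFB e he)⟩

/-- For an uncrossable function `f`, two distinct minimally unsatisfied sets
(with respect to an edge set `F`) are disjoint. -/
theorem minimal_unsatisfied_disjoint
    {V : Type*} [Fintype V] [DecidableEq V]
    (f : Finset V → ℕ) (h01 : ∀ S, f S ≤ 1)
    (hempty : f (∅ : Finset V) = 0) (hV : f (Finset.univ : Finset V) = 0)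
    (huncross : ∀ A B : Finset V, f A = 1 → f B = 1 →
      (f (A ∩ B) = 1 ∧ f (A ∪ B) = 1) ∨ (f (A \ B) = 1 ∧ f (B \ A) = 1))
    (F : Finset (V × V)) (A B : Finset V)
    (hAuns : f A = 1 ∧ ∀ e ∈ F, ¬ crossesEdge e A)
    (hAmin : ∀ T : Finset V, T ⊂ A → T.Nonempty →
      ¬(f T = 1 ∧ ∀ e ∈ F, ¬ crossesEdge e T))
    (hBuns : f B = 1 ∧ ∀ e ∈ F, ¬ crossesEdge e B)
    (hBmin : ∀ T : Finset V, T ⊂ B → T.Nonempty →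
      ¬(f T = 1 ∧ ∀ e ∈ F, ¬ crossesEdge e T))
    (hne : A ≠ B) :
    A ∩ B = ∅ :=
  minimal_unsatisfied_disjoint_general f hempty huncross F A B hAuns hAmin hBuns hBmin hne
end

section
/- For the 2-edge-connectivity augmentation requirement function, f is uncrossable: given a graph (V, Y), define f(S)=1 if exactly one edge of Y crosses the cut (S, V∖S) and f(S)=0 otherwise; then f(∅)=f(V)=0 and for all A,B with f(A)=f(B)=1, either f(A∩B)=f(A∪B)=1 or f(A∖B)=f(B∖A)=1. -/
/-!
Let `e` and `e'` be the unique edges crossing `A` and `B`. Every set built from `A` and `B` by a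
Boolean operation is crossed only by edges crossing `A` or `B`, hence only by `e` or `e'`, so the
claim is a statement about these two edges alone. If `e = e'`, its endpoints either lie on the
same side of `A` as of `B`, and then it crosses `A ∩ B` and `A ∪ B`, or on opposite sides, and then
it crosses `A \ B` and `B \ A`. Otherwise `e` lies inside or outside `B` and `e'` inside or outside
`A`; then each of them crosses exactly one set of each pair `A ∩ B, A ∪ B` and `A \ B, B \ A`, and
they cross different sets of the first pair exactly when they cross the same set of the second.
-/

open Finset

theorem Finset.card_filter_singleton_eq_one_iff {α : Type*} (p : α → Prop) [DecidablePred p]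
    (a : α) : (({a} : Finset α).filter p).card = 1 ↔ p a := by
  rw [filter_singleton]
  split_ifs with h <;> simp [h]

theorem Finset.card_filter_pair_eq_one_iff {α : Type*} [DecidableEq α] (p : α → Prop)
    [DecidablePred p] {a b : α} (hab : a ≠ b) :
    (({a, b} : Finset α).filter p).card = 1 ↔ Xor (p a) (p b) := by
  rw [filter_insert, filter_singleton]
  split_ifs with ha hb hb <;> simp [ha, hb, hab, Xor]

namespace AugmentationRequirement

variable {V : Type*} [DecidableEq V]

def Crosses (S : Finset V) (g : V × V) : Prop := ¬(g.1 ∈ S ↔ g.2 ∈ S)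

instance (S : Finset V) : DecidablePred (Crosses S) :=
  fun g => inferInstanceAs (Decidable ¬(g.1 ∈ S ↔ g.2 ∈ S))

def cut (Y : Finset (V × V)) (S : Finset V) : Finset (V × V) := Y.filter (Crosses S)

variable {Y : Finset (V × V)}

theorem mem_cut {S : Finset V} {g : V × V} : g ∈ cut Y S ↔ g ∈ Y ∧ Crosses S g := mem_filter

theorem cut_empty : cut Y ∅ = ∅ := by
  simp [cut, Crosses]

theorem cut_univ [Fintype V] : cut Y univ = ∅ := by
  simp [cut, Crosses]

theorem crosses_or_crosses_of_mem_iff {A B T : Finset V} (φ : Prop → Prop → Prop)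
    (hT : ∀ x, x ∈ T ↔ φ (x ∈ A) (x ∈ B)) {g : V × V} (hg : Crosses T g) :
    Crosses A g ∨ Crosses B g := by
  by_contra! h
  refine hg ?_
  rw [hT, hT, propext (not_not.1 h.1), propext (not_not.1 h.2)]

theorem mem_cut_of_cut_eq_singleton {S : Finset V} {e : V × V} (h : cut Y S = {e}) :
    e ∈ Y ∧ Crosses S e :=
  mem_cut.1 (h ▸ mem_singleton_self e)

theorem eq_of_crosses_of_cut_eq_singleton {S : Finset V} {e g : V × V} (h : cut Y S = {e})
    (hgY : g ∈ Y) (hg : Crosses S g) : g = e :=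
  mem_singleton.1 (h ▸ mem_cut.2 ⟨hgY, hg⟩)

theorem cut_eq_filter_pair_of_mem_iff {A B T : Finset V} (φ : Prop → Prop → Prop)
    (hT : ∀ x, x ∈ T ↔ φ (x ∈ A) (x ∈ B)) {e e' : V × V} (hA : cut Y A = {e})
    (hB : cut Y B = {e'}) :
    cut Y T = ({e, e'} : Finset (V × V)).filter (Crosses T) := by
  have heY := (mem_cut_of_cut_eq_singleton hA).1
  have he'Y := (mem_cut_of_cut_eq_singleton hB).1
  ext g
  simp only [mem_cut, mem_filter, mem_insert, mem_singleton]
  constructor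
  · rintro ⟨hgY, hg⟩
    refine ⟨?_, hg⟩
    rcases crosses_or_crosses_of_mem_iff φ hT hg with hgA | hgB
    · exact .inl (eq_of_crosses_of_cut_eq_singleton hA hgY hgA)
    · exact .inr (eq_of_crosses_of_cut_eq_singleton hB hgY hgB)
  · rintro ⟨rfl | rfl, hg⟩
    exacts [⟨heY, hg⟩, ⟨he'Y, hg⟩]

theorem crosses_inter_and_union_or_sdiff {A B : Finset V} {e : V × V} (hA : Crosses A e)
    (hB : Crosses B e) :
    (Crosses (A ∩ B) e ∧ Crosses (A ∪ B) e) ∨ (Crosses (A \ B) e ∧ Crosses (B \ A) e) := by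
  simp only [Crosses, mem_inter, mem_union, mem_sdiff] at *
  tauto

theorem xor_crosses_inter_and_union_or_sdiff {A B : Finset V} {e e' : V × V}
    (hA : Crosses A e) (hB : ¬Crosses B e) (hA' : ¬Crosses A e') (hB' : Crosses B e') :
    (Xor (Crosses (A ∩ B) e) (Crosses (A ∩ B) e') ∧
        Xor (Crosses (A ∪ B) e) (Crosses (A ∪ B) e')) ∨
      (Xor (Crosses (A \ B) e) (Crosses (A \ B) e') ∧
        Xor (Crosses (B \ A) e) (Crosses (B \ A) e')) := by
  simp only [Crosses, Xor, mem_inter, mem_union, mem_sdiff] at *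
  by_cases h1 : e.1 ∈ B <;> by_cases h2 : e'.1 ∈ A <;> by_cases h3 : e.1 ∈ A <;>
    by_cases h4 : e'.1 ∈ B <;> simp_all

end AugmentationRequirement

open Finset AugmentationRequirement in
/-- The 2-edge-connectivity augmentation requirement function — `f S = 1` iff
exactly one edge of `Y` crosses the cut `(S, V \ S)` — is uncrossable. -/
theorem augmentation_requirement_uncrossable
    {V : Type*} [Fintype V] [DecidableEq V]
    (Y : Finset (V × V)) (f : Finset V → ℕ)
    (hf : ∀ S : Finset V,
      f S = if (Y.filter (fun e => ¬(e.1 ∈ S ↔ e.2 ∈ S))).card = 1 then 1 else 0) :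
    f (∅ : Finset V) = 0 ∧ f (Finset.univ : Finset V) = 0 ∧
      ∀ A B : Finset V, f A = 1 → f B = 1 →
        (f (A ∩ B) = 1 ∧ f (A ∪ B) = 1) ∨ (f (A \ B) = 1 ∧ f (B \ A) = 1) := by
  have hf_cut : ∀ S, f S = if (cut Y S).card = 1 then 1 else 0 := hf
  refine ⟨by simp [hf_cut, cut_empty], by simp [hf_cut, cut_univ], fun A B hA hB => ?_⟩
  have key : ∀ S, f S = 1 ↔ (cut Y S).card = 1 := fun S => by simp [hf_cut]
  obtain ⟨e, hcutA⟩ := card_eq_one.1 ((key A).1 hA)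
  obtain ⟨e', hcutB⟩ := card_eq_one.1 ((key B).1 hB)
  simp only [key, cut_eq_filter_pair_of_mem_iff (· ∧ ·) (fun _ => mem_inter) hcutA hcutB,
    cut_eq_filter_pair_of_mem_iff (· ∨ ·) (fun _ => mem_union) hcutA hcutB,
    cut_eq_filter_pair_of_mem_iff (fun a b => a ∧ ¬b) (fun _ => mem_sdiff) hcutA hcutB,
    cut_eq_filter_pair_of_mem_iff (fun a b => b ∧ ¬a) (fun _ => mem_sdiff) hcutA hcutB]
  obtain ⟨heY, heA⟩ := mem_cut_of_cut_eq_singleton hcutA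
  obtain ⟨he'Y, he'B⟩ := mem_cut_of_cut_eq_singleton hcutB
  by_cases hee : e = e'
  · subst hee
    simpa only [pair_eq_singleton, card_filter_singleton_eq_one_iff] using
      crosses_inter_and_union_or_sdiff heA he'B
  · simpa only [card_filter_pair_eq_one_iff _ hee] using
      xor_crosses_inter_and_union_or_sdiff heA
        (fun h => hee (eq_of_crosses_of_cut_eq_singleton hcutB heY h))
        (fun h => hee (eq_of_crosses_of_cut_eq_singleton hcutA he'Y h).symm) he'B
end

section
/- Crossing-family partition property: Let 𝒮 be a laminar family of subsets of V containing a set A, and for each S ∈ 𝒮 with S ⊆ A define α(S) = δ_F(S) ∖ ∪{δ_F(T) : T ∈ 𝒮, T ⊊ S}. Then the sets {α(S) : S ∈ 𝒮, S ⊆ A} are pairwise disjoint and their union contains δ_F(A); in particular they partition δ_F(A) when every edge of δ_F(A) lies in some δ_F(S) with S ⊆ A minimal. -/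
/-- The edges of `F` with exactly one endpoint in `S`. -/
def cutE {V : Type*} [DecidableEq V] (F : Finset (V × V)) (S : Finset V) :
    Finset (V × V) :=
  F.filter fun e => ¬(e.1 ∈ S ↔ e.2 ∈ S)

/-- `α(S) = δ_F(S) \ ⋃ {δ_F(T) : T ∈ 𝒮, T ⊊ S}`. -/
def alphaE {V : Type*} [DecidableEq V] (F : Finset (V × V))
    (𝒮 : Finset (Finset V)) (S : Finset V) : Finset (V × V) :=
  cutE F S \ (𝒮.filter fun T => T ⊂ S).biUnion (cutE F)

/-
An edge `e` of `δ_F(A)` lies in `α(S)` exactly when `S` is a minimal member of `𝒮` whose cut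
contains `e`. Such minimal members below `A` exist since `A` itself qualifies. Two of them are
comparable or disjoint by laminarity; comparable ones coincide by minimality, and disjoint
`S, S' ⊆ A` would put both endpoints of `e` in `S ∪ S' ⊆ A`, so `e` could not cross `A`.
-/

section
variable {V : Type*} [DecidableEq V] {F : Finset (V × V)} {𝒮 : Finset (Finset V)}
  {A S T : Finset V} {e : V × V}

theorem mem_cutE : e ∈ cutE F S ↔ e ∈ F ∧ ¬(e.1 ∈ S ↔ e.2 ∈ S) :=
  Finset.mem_filter

theorem mem_alphaE_iff_minimal (hS : S ∈ 𝒮) :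
    e ∈ alphaE F 𝒮 S ↔ Minimal (fun T => T ∈ 𝒮 ∧ e ∈ cutE F T) S := by
  rw [alphaE, Finset.mem_sdiff, minimal_iff_forall_lt]
  simp only [Finset.mem_biUnion, Finset.mem_filter, not_exists, not_and, hS, true_and]
  exact and_congr_right fun _ => ⟨fun h T hTS hT => h T ⟨hT, hTS⟩, fun h T hT => h hT.2 hT.1⟩

theorem notMem_cutE_of_disjoint (hST : Disjoint S T) (hS : e ∈ cutE F S) (hT : e ∈ cutE F T)
    (hA : S ∪ T ⊆ A) : e ∉ cutE F A := by
  rw [mem_cutE] at hS hT ⊢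
  have h1 : e.1 ∈ S ∪ T := by grind [Finset.disjoint_left]
  have h2 : e.2 ∈ S ∪ T := by grind [Finset.disjoint_left]
  exact fun h => h.2 (iff_of_true (hA h1) (hA h2))

end

theorem alpha_partitions_cut_general
    {V : Type*} [DecidableEq V]
    (F : Finset (V × V)) (𝒮 : Finset (Finset V))
    (hlam : ∀ S ∈ 𝒮, ∀ T ∈ 𝒮, S ⊆ T ∨ T ⊆ S ∨ Disjoint S T)
    (A : Finset V) (hA : A ∈ 𝒮) :
    ∀ e ∈ cutE F A, ∃! S : Finset V, S ∈ 𝒮 ∧ S ⊆ A ∧ e ∈ alphaE F 𝒮 S := by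
  intro e he
  let crosses : Finset V → Prop := fun T => T ∈ 𝒮 ∧ e ∈ cutE F T
  obtain ⟨S, hSA, hS⟩ := exists_minimal_le_of_wellFoundedLT crosses A ⟨hA, he⟩
  refine ⟨S, ⟨hS.prop.1, hSA, (mem_alphaE_iff_minimal hS.prop.1).2 hS⟩, ?_⟩
  rintro S' ⟨hS'𝒮, hS'A, heS'⟩
  have hS' := (mem_alphaE_iff_minimal hS'𝒮).1 heS'
  rcases hlam S' hS'𝒮 S hS.prop.1 with h | h | h
  · exact hS.eq_of_le hS'.prop h
  · exact (hS'.eq_of_le hS.prop h).symm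
  · exact absurd he <|
      notMem_cutE_of_disjoint h hS'.prop.2 hS.prop.2 (Finset.union_subset hS'A hSA)

/-- Partition property: for a laminar family `𝒮` containing `A`, every edge of
`δ_F(A)` lies in exactly one of the sets `α(S)` for `S ∈ 𝒮`, `S ⊆ A`; i.e. the
collection `{α(S) : S ∈ 𝒮, S ⊆ A}` partitions `δ_F(A)`. -/
theorem alpha_partitions_cut
    {V : Type*} [Fintype V] [DecidableEq V]
    (F : Finset (V × V)) (𝒮 : Finset (Finset V))
    (hlam : ∀ S ∈ 𝒮, ∀ T ∈ 𝒮, S ⊆ T ∨ T ⊆ S ∨ Disjoint S T)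
    (A : Finset V) (hA : A ∈ 𝒮) :
    ∀ e ∈ cutE F A, ∃! S : Finset V, S ∈ 𝒮 ∧ S ⊆ A ∧ e ∈ alphaE F 𝒮 S :=
  alpha_partitions_cut_general F 𝒮 hlam A hA
end

section
/- Degree bound from criticality (Lemma 'twice'): if additionally every critical set A in iteration i satisfies αⁱ(A) ≠ ∅, and no active set is critical, then Σ_{A ∈ 𝒜ⁱ} |δ_F(A)| ≤ 2|𝒜ⁱ| − 2. -/
open Finset

section SumCard

variable {ι β : Type*} {s t u : Finset ι} {f : ι → Finset β}

lemma card_le_sum_card_of_nonempty (hne : ∀ i ∈ t, (f i).Nonempty) :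
    #t ≤ ∑ i ∈ t, #(f i) := by
  simpa using card_nsmul_le_sum t (fun i => #(f i)) 1
    fun i hi => card_pos.mpr (hne i hi)

lemma sum_card_add_card_le_sum_card [DecidableEq ι] (hsub : s ∪ t ⊆ u) (hdisj : Disjoint s t)
    (hne : ∀ i ∈ t, (f i).Nonempty) :
    ∑ i ∈ s, #(f i) + #t ≤ ∑ i ∈ u, #(f i) :=
  calc ∑ i ∈ s, #(f i) + #t
      ≤ ∑ i ∈ s, #(f i) + ∑ i ∈ t, #(f i) := by gcongr; exact card_le_sum_card_of_nonempty hne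
    _ = ∑ i ∈ s ∪ t, #(f i) := (sum_union hdisj).symm
    _ ≤ ∑ i ∈ u, #(f i) := sum_le_sum_of_subset hsub

end SumCard

theorem active_degree_bound_general
    {V : Type*} [DecidableEq V]
    (F : Finset (V × V)) (𝒮 𝒜 ℛ : Finset (Finset V))
    (α : Finset V → Finset (V × V))
    (h𝒜 : 𝒜 ⊆ 𝒮) (hℛ : ℛ ⊆ 𝒮) (hdisj : Disjoint 𝒜 ℛ)
    (hsum : (∑ S ∈ 𝒮, ((α S).card : ℤ))
      ≤ 2 * (𝒜.card : ℤ) - 2 + (ℛ.card : ℤ))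
    (hact : ∀ A ∈ 𝒜, α A = cutE F A)
    (hcrit : ∀ A ∈ ℛ, (α A).Nonempty) :
    (∑ A ∈ 𝒜, ((cutE F A).card : ℤ)) ≤ 2 * (𝒜.card : ℤ) - 2 := by
  have hcut : ∑ A ∈ 𝒜, #(cutE F A) = ∑ A ∈ 𝒜, #(α A) :=
    sum_congr rfl fun A hA => by rw [hact A hA]
  have key : ∑ A ∈ 𝒜, #(cutE F A) + #ℛ ≤ ∑ S ∈ 𝒮, #(α S) :=
    hcut ▸ sum_card_add_card_le_sum_card (union_subset h𝒜 hℛ) hdisj hcrit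
  zify at key
  linarith

/-- Degree bound from criticality: if `∑_{S ∈ 𝒮} |α(S)| ≤ 2|𝒜| − 2 + |ℛ|`,
no active set is critical, `α(A) = δ_F(A)` for active `A`, and `α(A) ≠ ∅` for
every critical `A`, then `∑_{A ∈ 𝒜} |δ_F(A)| ≤ 2|𝒜| − 2`. -/
theorem active_degree_bound
    {V : Type*} [Fintype V] [DecidableEq V]
    (F : Finset (V × V)) (𝒮 𝒜 ℛ : Finset (Finset V))
    (α : Finset V → Finset (V × V))
    (h𝒜 : 𝒜 ⊆ 𝒮) (hℛ : ℛ ⊆ 𝒮) (hdisj : Disjoint 𝒜 ℛ)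
    (hsum : (∑ S ∈ 𝒮, ((α S).card : ℤ))
      ≤ 2 * (𝒜.card : ℤ) - 2 + (ℛ.card : ℤ))
    (hact : ∀ A ∈ 𝒜, α A = cutE F A)
    (hcrit : ∀ A ∈ ℛ, (α A).Nonempty) :
    (∑ A ∈ 𝒜, ((cutE F A).card : ℤ)) ≤ 2 * (𝒜.card : ℤ) - 2 :=
  active_degree_bound_general F 𝒮 𝒜 ℛ α h𝒜 hℛ hdisj hsum hact hcrit
end

section
/- For proper requirement functions, the minimally unsatisfied sets with respect to a forest F of tight edges are exactly the connected components C of F with f(C)=1. -/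
/-! A minimal unsatisfied set `S` contains the component `C` of any of its vertices, and `C` is
itself uncrossed. If `f C = 0`, then `S \ C` is uncrossed and, since `f` is proper and
`f S = 1`, also has `f (S \ C) = 1`, contradicting minimality; so `f C = 1` and `C = S`.
Conversely, a nonempty uncrossed subset of a component contains the whole component. -/

namespace EdgeCut

open Finset Relation

variable {V : Type*}

def Adj (F : Finset (V × V)) (a b : V) : Prop := (a, b) ∈ F ∨ (b, a) ∈ F

/-- `δ_F(S) = ∅`. -/
def Uncrossed (F : Finset (V × V)) (S : Finset V) : Prop := ∀ e ∈ F, (e.1 ∈ S ↔ e.2 ∈ S)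

def IsComponent (F : Finset (V × V)) (S : Finset V) : Prop :=
  ∃ v, ∀ u, u ∈ S ↔ ReflTransGen (Adj F) v u

noncomputable def component [Finite V] (F : Finset (V × V)) (v : V) : Finset V :=
  (Set.toFinite {u | ReflTransGen (Adj F) v u}).toFinset

variable {F : Finset (V × V)} {S T : Finset V}

instance : Std.Symm (Adj F) := ⟨fun _ _ h => h.symm⟩

theorem Uncrossed.mem_of_reflTransGen (hS : Uncrossed F S) {u w : V} (hu : u ∈ S)
    (h : ReflTransGen (Adj F) u w) : w ∈ S := by
  induction h with
  | refl => exact hu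
  | tail _ step ih =>
    rcases step with he | he
    · exact (hS _ he).mp ih
    · exact (hS _ he).mpr ih

theorem Uncrossed.sdiff [DecidableEq V] (hS : Uncrossed F S) (hT : Uncrossed F T) :
    Uncrossed F (S \ T) := fun e he => by
  simp only [mem_sdiff, hS e he, hT e he]

theorem IsComponent.uncrossed (hS : IsComponent F S) : Uncrossed F S := by
  obtain ⟨v, hv⟩ := hS
  intro e he
  simp only [hv]
  exact ⟨fun h => h.tail (Or.inl he), fun h => h.tail (Or.inr he)⟩

theorem IsComponent.subset_of_uncrossed (hS : IsComponent F S) (hT : Uncrossed F T) {u : V}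
    (huS : u ∈ S) (huT : u ∈ T) : S ⊆ T := by
  obtain ⟨v, hv⟩ := hS
  intro w hw
  have hvu : ReflTransGen (Adj F) u v := Std.Symm.symm _ _ ((hv u).mp huS)
  exact hT.mem_of_reflTransGen huT (hvu.trans ((hv w).mp hw))

theorem IsComponent.not_uncrossed_of_ssubset (hS : IsComponent F S) (hTS : T ⊂ S)
    (hT : T.Nonempty) : ¬Uncrossed F T := fun hTu => by
  obtain ⟨u, hu⟩ := hT
  exact hTS.not_subset (hS.subset_of_uncrossed hTu (hTS.subset hu) hu)

theorem mem_component [Finite V] {v u : V} : u ∈ component F v ↔ ReflTransGen (Adj F) v u :=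
  Set.Finite.mem_toFinset _

theorem isComponent_component [Finite V] (v : V) : IsComponent F (component F v) :=
  ⟨v, fun _ => mem_component⟩

theorem self_mem_component [Finite V] (v : V) : v ∈ component F v :=
  mem_component.mpr ReflTransGen.refl

theorem Uncrossed.component_subset [Finite V] (hS : Uncrossed F S) {v : V} (hv : v ∈ S) :
    component F v ⊆ S := fun _ hu => hS.mem_of_reflTransGen hv (mem_component.mp hu)

theorem eq_one_sdiff_of_ne_one [DecidableEq V] {f : Finset V → ℕ} (h01 : ∀ S, f S ≤ 1)
    (hprop : ∀ A B : Finset V, Disjoint A B → f (A ∪ B) ≤ max (f A) (f B))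
    (hS : f S = 1) (hTS : T ⊆ S) (hT : f T ≠ 1) : f (S \ T) = 1 := by
  have hsplit := hprop T (S \ T) disjoint_sdiff
  rw [union_sdiff_of_subset hTS, hS] at hsplit
  have := h01 T
  have := h01 (S \ T)
  omega

theorem isComponent_of_minimal [Finite V] [DecidableEq V] {f : Finset V → ℕ}
    (h01 : ∀ S, f S ≤ 1) (hempty : f ∅ = 0)
    (hprop : ∀ A B : Finset V, Disjoint A B → f (A ∪ B) ≤ max (f A) (f B))
    (hfS : f S = 1) (hS : Uncrossed F S)
    (hmin : ∀ T, T ⊂ S → T.Nonempty → ¬(f T = 1 ∧ Uncrossed F T)) : IsComponent F S := by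
  have nonempty_of_eq_one {T : Finset V} (hT : f T = 1) : T.Nonempty :=
    nonempty_iff_ne_empty.mpr (by rintro rfl; omega)
  obtain ⟨v, hv⟩ := nonempty_of_eq_one hfS
  have hCS := hS.component_subset hv
  have hvC := self_mem_component (F := F) v
  have hC := (isComponent_component (F := F) v).uncrossed
  by_cases hfC : f (component F v) = 1
  · obtain rfl : component F v = S := by
      by_contra hne
      exact hmin _ (ssubset_of_subset_of_ne hCS hne) ⟨v, hvC⟩ ⟨hfC, hC⟩
    exact isComponent_component v
  · have hfT := eq_one_sdiff_of_ne_one h01 hprop hfS hCS hfC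
    exact absurd ⟨hfT, hS.sdiff hC⟩
      (hmin _ (sdiff_ssubset hCS ⟨v, hvC⟩) (nonempty_of_eq_one hfT))

end EdgeCut

/-- For a proper requirement function `f` and a set `F` of tight edges, the
minimally unsatisfied sets are exactly the vertex sets of connected components
`C` of `(V, F)` with `f C = 1`.  A set is unsatisfied if `f S = 1` and no edge
of `F` crosses `S`; connected components are reachability classes of the
relation generated by the edges of `F`. -/
theorem minimal_unsatisfied_iff_component
    {V : Type*} [Fintype V] [DecidableEq V]
    (f : Finset V → ℕ) (h01 : ∀ S, f S ≤ 1)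
    (hV : f (Finset.univ : Finset V) = 0)
    (hsym : ∀ S : Finset V, f S = f (Finset.univ \ S))
    (hprop : ∀ A B : Finset V, Disjoint A B → f (A ∪ B) ≤ max (f A) (f B))
    (F : Finset (V × V)) (S : Finset V) :
    ((f S = 1 ∧ ∀ e ∈ F, (e.1 ∈ S ↔ e.2 ∈ S)) ∧
        ∀ T : Finset V, T ⊂ S → T.Nonempty →
          ¬(f T = 1 ∧ ∀ e ∈ F, (e.1 ∈ T ↔ e.2 ∈ T))) ↔
      ((∃ v : V, ∀ u : V, u ∈ S ↔
          Relation.ReflTransGen (fun a b => (a, b) ∈ F ∨ (b, a) ∈ F) v u) ∧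
        f S = 1) := by
  have hempty : f ∅ = 0 := by simpa [hV] using hsym ∅
  constructor
  · rintro ⟨⟨hfS, hS⟩, hmin⟩
    exact ⟨EdgeCut.isComponent_of_minimal h01 hempty hprop hfS hS hmin, hfS⟩
  · rintro ⟨hS, hfS⟩
    exact ⟨⟨hfS, EdgeCut.IsComponent.uncrossed hS⟩, fun T hTS hT hTu =>
      EdgeCut.IsComponent.not_uncrossed_of_ssubset hS hTS hT hTu.2⟩
end
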